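/- Consider the chain complex 0 → ℤ →^{Φ_2} ℤ^3 →^{Φ_1} ℤ^6 → 0 where Φ_2(1) = (0,1,1) and Φ_1 sends the first basis vector to e_4+e_5+e_6−e_1−e_2−e_3 and the other two basis vectors to 0. Then H_2 = 0, H_1 ≅ ℤ generated by the class of the second basis vector, and H_0 ≅ ℤ^5. (Bredon homology of p31m.) -/
import Mathlib


open LinearMap Submodule

noncomputable def Phi2 : ℤ →ₗ[ℤ] (Fin 3 → ℤ) :=
  LinearMap.toSpanSingleton ℤ (Fin 3 → ℤ) ![0, 1, 1]

noncomputable def Phi1 : (Fin 3 → ℤ) →ₗ[ℤ] (Fin 6 → ℤ) :=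
  Matrix.toLin' !![-1, 0, 0; -1, 0, 0; -1, 0, 0; 1, 0, 0; 1, 0, 0; 1, 0, 0]

abbrev H1 : Type := ↥(ker Phi1) ⧸ (Submodule.comap (ker Phi1).subtype (range Phi2))

abbrev H0 : Type := (Fin 6 → ℤ) ⧸ (range Phi1)

lemma Phi2_apply (x : ℤ) : Phi2 x = x • ![0, 1, 1] := rfl

lemma Phi1_apply (x : Fin 3 → ℤ) (i : Fin 6) :
    Phi1 x i = x 0 * (![-1, -1, -1, 1, 1, 1] : Fin 6 → ℤ) i := by
  have h : ∀ i : Fin 6,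
      (!![-1, 0, 0; -1, 0, 0; -1, 0, 0; 1, 0, 0; 1, 0, 0; 1, 0, 0] : Matrix (Fin 6) (Fin 3) ℤ) i 0
        = (![-1, -1, -1, 1, 1, 1] : Fin 6 → ℤ) i ∧
      (!![-1, 0, 0; -1, 0, 0; -1, 0, 0; 1, 0, 0; 1, 0, 0; 1, 0, 0] : Matrix (Fin 6) (Fin 3) ℤ) i 1 = 0 ∧
      (!![-1, 0, 0; -1, 0, 0; -1, 0, 0; 1, 0, 0; 1, 0, 0; 1, 0, 0] : Matrix (Fin 6) (Fin 3) ℤ) i 2 = 0 := by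
    decide
  obtain ⟨h0, h1, h2⟩ := h i
  simp only [Phi1, Matrix.toLin'_apply, Matrix.mulVec, dotProduct, Fin.sum_univ_three]
  rw [h0, h1, h2]
  ring

lemma mem_ker_Phi1 (x : Fin 3 → ℤ) : x ∈ ker Phi1 ↔ x 0 = 0 := by
  constructor
  · intro h
    have := congrFun (LinearMap.mem_ker.mp h) 3
    rw [Phi1_apply] at this
    have h3 : (![-1, -1, -1, 1, 1, 1] : Fin 6 → ℤ) 3 = 1 := by decide
    rw [h3] at this
    simpa using this
  · intro h
    ext i
    rw [Phi1_apply, h]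
    simp

-- the linear functional on ker Phi1 computing the H1 class
noncomputable def fH1 : ↥(ker Phi1) →ₗ[ℤ] ℤ :=
  ((LinearMap.proj 1 : (Fin 3 → ℤ) →ₗ[ℤ] ℤ) - (LinearMap.proj 2)) ∘ₗ (ker Phi1).subtype

lemma fH1_apply (y : ↥(ker Phi1)) : fH1 y = (y : Fin 3 → ℤ) 1 - (y : Fin 3 → ℤ) 2 := rfl

lemma ker_fH1 : Submodule.comap (ker Phi1).subtype (range Phi2) = ker fH1 := by
  ext y
  simp only [Submodule.mem_comap, LinearMap.mem_range, LinearMap.mem_ker, fH1_apply]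
  constructor
  · rintro ⟨c, hc⟩
    have h1 := congrFun hc 1
    have h2 := congrFun hc 2
    simp [Phi2_apply] at h1 h2
    omega
  · intro h
    refine ⟨(y : Fin 3 → ℤ) 1, ?_⟩
    have h0 : (y : Fin 3 → ℤ) 0 = 0 := (mem_ker_Phi1 _).mp y.2
    ext i
    fin_cases i <;> simp [Phi2_apply] <;> omega

-- the map for H0
noncomputable def gH0 : (Fin 6 → ℤ) →ₗ[ℤ] (Fin 5 → ℤ) :=
  LinearMap.pi fun j =>
    (LinearMap.proj (j.succ) : (Fin 6 → ℤ) →ₗ[ℤ] ℤ) +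
      (![-1, -1, 1, 1, 1] : Fin 5 → ℤ) j • (LinearMap.proj 0)

lemma range_Phi1_eq : range Phi1 = ker gH0 := by
  have w0 : (![-1, -1, -1, 1, 1, 1] : Fin 6 → ℤ) 0 = -1 := by decide
  have w1 : (![-1, -1, -1, 1, 1, 1] : Fin 6 → ℤ) 1 = -1 := by decide
  have w2 : (![-1, -1, -1, 1, 1, 1] : Fin 6 → ℤ) 2 = -1 := by decide
  have w3 : (![-1, -1, -1, 1, 1, 1] : Fin 6 → ℤ) 3 = 1 := by decide
  have w4 : (![-1, -1, -1, 1, 1, 1] : Fin 6 → ℤ) 4 = 1 := by decide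
  have w5 : (![-1, -1, -1, 1, 1, 1] : Fin 6 → ℤ) 5 = 1 := by decide
  ext x
  simp only [LinearMap.mem_range, LinearMap.mem_ker]
  constructor
  · rintro ⟨c, rfl⟩
    funext j
    have p1 : Phi1 c 1 = c 0 * (-1) := by rw [Phi1_apply, w1]
    have p2 : Phi1 c 2 = c 0 * (-1) := by rw [Phi1_apply, w2]
    have p3 : Phi1 c 3 = c 0 * 1 := by rw [Phi1_apply, w3]
    have p4 : Phi1 c 4 = c 0 * 1 := by rw [Phi1_apply, w4]
    have p5 : Phi1 c 5 = c 0 * 1 := by rw [Phi1_apply, w5]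
    have p0 : Phi1 c 0 = c 0 * (-1) := by rw [Phi1_apply, w0]
    fin_cases j
    · show Phi1 c 1 + (-1) * Phi1 c 0 = 0
      rw [p0, p1]; ring
    · show Phi1 c 2 + (-1) * Phi1 c 0 = 0
      rw [p0, p2]; ring
    · show Phi1 c 3 + 1 * Phi1 c 0 = 0
      rw [p0, p3]; ring
    · show Phi1 c 4 + 1 * Phi1 c 0 = 0
      rw [p0, p4]; ring
    · show Phi1 c 5 + 1 * Phi1 c 0 = 0
      rw [p0, p5]; ring
  · intro h
    refine ⟨![-(x 0), 0, 0], ?_⟩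
    have h0 : x 1 + (-1) * x 0 = 0 := congrFun h 0
    have h1 : x 2 + (-1) * x 0 = 0 := congrFun h 1
    have h2 : x 3 + 1 * x 0 = 0 := congrFun h 2
    have h3 : x 4 + 1 * x 0 = 0 := congrFun h 3
    have h4 : x 5 + 1 * x 0 = 0 := congrFun h 4
    funext i
    rw [Phi1_apply]
    have hc : (![-(x 0), 0, 0] : Fin 3 → ℤ) 0 = -(x 0) := rfl
    rw [hc]
    fin_cases i
    · show -x 0 * (-1) = x 0; ring
    · show -x 0 * (-1) = x 1; omega
    · show -x 0 * (-1) = x 2; omega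
    · show -x 0 * 1 = x 3; omega
    · show -x 0 * 1 = x 4; omega
    · show -x 0 * 1 = x 5; omega

lemma gH0_surj : Function.Surjective gH0 := by
  intro t
  refine ⟨fun i => if h : i = 0 then 0 else t (i.pred h), ?_⟩
  funext j
  show (if h : (j.succ : Fin 6) = 0 then 0 else t ((j.succ).pred h)) +
      (![-1, -1, 1, 1, 1] : Fin 5 → ℤ) j * (if h : (0 : Fin 6) = 0 then 0 else t ((0 : Fin 6).pred h)) = t j
  rw [dif_pos rfl, dif_neg (Fin.succ_ne_zero j)]
  simp

theorem stmt_17 :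
    Subsingleton ↥(ker Phi2) ∧
    Nonempty (H1 ≃+ ℤ) ∧
    (∃ v : ↥(ker Phi1), (v : Fin 3 → ℤ) = ![0, 1, 0] ∧
      ∀ x : H1, ∃ k : ℤ, x = k • (Submodule.Quotient.mk v : H1)) ∧
    Nonempty (H0 ≃ₗ[ℤ] (Fin 5 → ℤ)) := by
  have hker2 : ker Phi2 = ⊥ := by
    ext x
    simp only [LinearMap.mem_ker, Submodule.mem_bot]
    constructor
    · intro h
      have := congrFun h 1
      simpa [Phi2_apply] using this
    · rintro rfl; simp
  have hv : (![0, 1, 0] : Fin 3 → ℤ) ∈ ker Phi1 := by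
    rw [mem_ker_Phi1]; rfl
  refine ⟨?_, ?_, ?_, ?_⟩
  · rw [hker2]; infer_instance
  · -- H1 ≃+ ℤ
    have hsurj : Function.Surjective fH1 := by
      intro t
      refine ⟨⟨t • ![0, 1, 0], ?_⟩, ?_⟩
      · rw [mem_ker_Phi1]; simp
      · simp [fH1_apply]
    exact ⟨((Submodule.quotEquivOfEq _ _ ker_fH1).trans
      (fH1.quotKerEquivOfSurjective hsurj)).toAddEquiv⟩
  · -- generator
    refine ⟨⟨![0, 1, 0], hv⟩, rfl, ?_⟩
    intro x
    obtain ⟨y, rfl⟩ := Submodule.Quotient.mk_surjective _ x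
    refine ⟨(y : Fin 3 → ℤ) 1 - (y : Fin 3 → ℤ) 2, ?_⟩
    rw [← Submodule.Quotient.mk_smul, Submodule.Quotient.eq]
    have h0 : (y : Fin 3 → ℤ) 0 = 0 := (mem_ker_Phi1 _).mp y.2
    simp only [Submodule.mem_comap, LinearMap.mem_range]
    refine ⟨(y : Fin 3 → ℤ) 2, ?_⟩
    ext i
    simp only [Submodule.coe_subtype, Submodule.coe_sub, SetLike.val_smul, Pi.sub_apply,
      Pi.smul_apply]
    fin_cases i <;> simp [Phi2_apply] <;> omega
  · -- H0
    exact ⟨(Submodule.quotEquivOfEq _ _ range_Phi1_eq).trans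
      (gH0.quotKerEquivOfSurjective gH0_surj)⟩
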